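/- arXiv:1710.01898 — 2 statements merged into one kernel-verified Lean document; each statement's English description precedes it below -/
import Mathlib

section
/- Let ξ₁, …, ξₙ be i.i.d. centered real random variables with E(ξ₁¹⁶) < ∞ (so that all needed moments exist), and set Rₙ = ((1/n)∑ᵢ₌₁ⁿ ξᵢ)². Then E((Rₙ − Rₙ₋₁)⁴) = O(n⁻⁶) as n → ∞. -/
/-!
Write `S_n = ξ_0 + ⋯ + ξ_{n-1}`. Expanding `(S_n + ξ_n)^k` and using independence gives the
binomial recursion `E S_{n+1}^k = ∑_j C(k,j) E S_n^j E ξ^{k-j}`. Since `E ξ = 0`, the increment of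
`E S_n^k` only involves the moments `E S_n^j` with `j ≤ k - 2`, so induction on `k` gives
`E S_n^k = O(n^⌊k/2⌋)`. On the other hand `R_n - R_{n-1} = (2 S_{n-1} ξ_{n-1} + ξ_{n-1}^2) / n^2
- c_n S_{n-1}^2` with `0 ≤ c_n = O(n⁻³)`, so `E (R_n - R_{n-1})^4` is bounded by a multiple of
`n⁻⁸ (E S_{n-1}^4 E ξ^4 + E ξ^8) + n⁻¹² E S_{n-1}^8 = O(n⁻⁶)`.
-/

open MeasureTheory ProbabilityTheory Finset Filter Asymptotics

theorem add_pow_four_le (p q : ℝ) : (p + q) ^ 4 ≤ 8 * (p ^ 4 + q ^ 4) := by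
  nlinarith [sq_nonneg (p - q), sq_nonneg (p + q), sq_nonneg (p ^ 2 - q ^ 2)]

theorem sq_mean_increment_pow_four_le (s x : ℝ) {N : ℝ} (hN : 2 ≤ N) :
    ((1 / N * (s + x)) ^ 2 - (1 / (N - 1) * s) ^ 2) ^ 4
      ≤ 1024 / N ^ 8 * (s ^ 4 * x ^ 4) + 64 / N ^ 8 * x ^ 8 + 32768 / N ^ 12 * s ^ 8 := by
  have hN1 : N - 1 ≠ 0 := by linarith
  set c := (2 * N - 1) / ((N - 1) ^ 2 * N ^ 2)
  have hc : c ≤ 8 / N ^ 3 := by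
    rw [div_le_div_iff₀ (by positivity) (by positivity)]
    nlinarith
  have hsplit : (1 / N * (s + x)) ^ 2 - (1 / (N - 1) * s) ^ 2
      = (2 * s * x + x ^ 2) / N ^ 2 + -(c * s ^ 2) := by
    simp only [c]; field_simp; ring
  have hx : (2 * s * x + x ^ 2) ^ 4 ≤ 8 * (16 * (s ^ 4 * x ^ 4) + x ^ 8) :=
    (add_pow_four_le _ _).trans_eq (by ring)
  have hs : (c * s ^ 2) ^ 4 ≤ (8 / N ^ 3 * s ^ 2) ^ 4 := by
    have : 0 ≤ c := div_nonneg (by linarith) (by positivity)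
    gcongr
  rw [hsplit]
  calc _ ≤ 8 * (((2 * s * x + x ^ 2) / N ^ 2) ^ 4 + (-(c * s ^ 2)) ^ 4) := add_pow_four_le _ _
    _ = 8 * ((2 * s * x + x ^ 2) ^ 4 / N ^ 8 + (c * s ^ 2) ^ 4) := by ring
    _ ≤ 8 * (8 * (16 * (s ^ 4 * x ^ 4) + x ^ 8) / N ^ 8 + (8 / N ^ 3 * s ^ 2) ^ 4) := by
        gcongr
    _ = _ := by ring

theorem abs_le_mul_pow_of_abs_sub_le {f : ℕ → ℝ} {D : ℝ} {e : ℕ}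
    (h : ∀ n, |f (n + 1) - f n| ≤ D * ((n : ℝ) + 1) ^ e) (n : ℕ) :
    |f n| ≤ (|f 0| + D) * ((n : ℝ) + 1) ^ (e + 1) := by
  have hD : 0 ≤ D := by simpa using (abs_nonneg _).trans (h 0)
  induction n with
  | zero => simp [hD]
  | succ n ih =>
    have hpow : ((n : ℝ) + 1) ^ (e + 1) + ((n : ℝ) + 1) ^ e ≤ ((n : ℝ) + 2) ^ (e + 1) := by
      calc ((n : ℝ) + 1) ^ (e + 1) + ((n : ℝ) + 1) ^ e = ((n : ℝ) + 1) ^ e * ((n : ℝ) + 2) := by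
            ring
        _ ≤ ((n : ℝ) + 2) ^ e * ((n : ℝ) + 2) := by gcongr; linarith
        _ = ((n : ℝ) + 2) ^ (e + 1) := by ring
    calc |f (n + 1)| ≤ |f n| + |f (n + 1) - f n| := by
          simpa using abs_add_le (f n) (f (n + 1) - f n)
      _ ≤ (|f 0| + D) * ((n : ℝ) + 1) ^ (e + 1) + (|f 0| + D) * ((n : ℝ) + 1) ^ e := by
          gcongr
          exact (h n).trans (by gcongr; linarith [abs_nonneg (f 0)])
      _ ≤ (|f 0| + D) * ((n : ℝ) + 2) ^ (e + 1) := by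
          rw [← mul_add]
          exact mul_le_mul_of_nonneg_left hpow (by positivity)
      _ = (|f 0| + D) * (((n + 1 : ℕ) : ℝ) + 1) ^ (e + 1) := by push_cast; ring

section BinomialConvolution

/- `E k n` stands for the moment `E S_n^k` of the partial sums and `m k` for `E ξ^k`. -/
variable {E : ℕ → ℕ → ℝ} {m : ℕ → ℝ} {k : ℕ}

theorem sub_eq_sum_of_binomial_convolution
    (hrec : ∀ n, E k (n + 1) = ∑ j ∈ range (k + 1), k.choose j * E j n * m (k - j))
    (hm0 : m 0 = 1) (hm1 : m 1 = 0) (n : ℕ) :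
    E k (n + 1) - E k n = ∑ j ∈ range (k - 1), k.choose j * E j n * m (k - j) := by
  rw [hrec]
  rcases k with _ | k
  · simp [hm0]
  · simp [sum_range_succ, hm0, hm1]

theorem eq_of_binomial_convolution_of_le_one (hk : k ≤ 1)
    (hrec : ∀ n, E k (n + 1) = ∑ j ∈ range (k + 1), k.choose j * E j n * m (k - j))
    (hm0 : m 0 = 1) (hm1 : m 1 = 0) (n : ℕ) : E k n = E k 0 := by
  induction n with
  | zero => rfl
  | succ n ih =>
    have := sub_eq_sum_of_binomial_convolution hrec hm0 hm1 n
    rwa [show k - 1 = 0 by omega, sum_range_zero, sub_eq_zero, ih] at this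

theorem exists_abs_le_of_binomial_convolution {K : ℕ}
    (hrec : ∀ k ≤ K, ∀ n, E k (n + 1) = ∑ j ∈ range (k + 1), k.choose j * E j n * m (k - j))
    (hm0 : m 0 = 1) (hm1 : m 1 = 0) :
    ∃ C, ∀ k ≤ K, ∀ n, |E k n| ≤ C * ((n : ℝ) + 1) ^ (k / 2) := by
  induction K with
  | zero =>
    refine ⟨|E 0 0|, fun k hk n => ?_⟩
    obtain rfl : k = 0 := by omega
    simp [eq_of_binomial_convolution_of_le_one zero_le_one (hrec 0 le_rfl) hm0 hm1 n]
  | succ K ih =>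
    obtain ⟨C, hC⟩ := ih fun k hk => hrec k (by omega)
    have hC0 : 0 ≤ C := by simpa using (abs_nonneg _).trans (hC 0 (Nat.zero_le K) 0)
    obtain ⟨C', hC'⟩ : ∃ C', ∀ n, |E (K + 1) n| ≤ C' * ((n : ℝ) + 1) ^ ((K + 1) / 2) := by
      rcases K with _ | K
      · refine ⟨|E 1 0|, fun n => ?_⟩
        simp [eq_of_binomial_convolution_of_le_one le_rfl (hrec 1 le_rfl) hm0 hm1 n]
      set B := C * ∑ j ∈ range (K + 1), ((K + 2).choose j : ℝ) * |m (K + 2 - j)|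
      refine ⟨|E (K + 2) 0| + B, fun n => ?_⟩
      rw [show (K + 1 + 1) / 2 = K / 2 + 1 by omega]
      refine abs_le_mul_pow_of_abs_sub_le (fun n => ?_) n
      rw [sub_eq_sum_of_binomial_convolution (hrec _ le_rfl) hm0 hm1]
      calc _ ≤ ∑ j ∈ range (K + 1), ((K + 2).choose j : ℝ) * |E j n| * |m (K + 2 - j)| := by
            exact (abs_sum_le_sum_abs _ _).trans_eq (by simp [abs_mul])
        _ ≤ ∑ j ∈ range (K + 1),
              ((K + 2).choose j : ℝ) * (C * ((n : ℝ) + 1) ^ (K / 2)) * |m (K + 2 - j)| := by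
            gcongr with j hj
            refine (hC j (by grind) n).trans ?_
            gcongr
            · linarith
            · grind
        _ = B * ((n : ℝ) + 1) ^ (K / 2) := by
            simp only [B, sum_mul, mul_sum]
            exact sum_congr rfl fun j _ => by ring
    refine ⟨max C C', fun k hk n => ?_⟩
    rcases (show k ≤ K ∨ k = K + 1 by omega) with hk | rfl
    · exact (hC k hk n).trans (by gcongr; exact le_max_left _ _)
    · exact (hC' n).trans (by gcongr; exact le_max_right _ _)

end BinomialConvolution

theorem MeasureTheory.MemLp.integrable_pow_of_le {α : Type*} [MeasurableSpace α] {μ : Measure α}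
    [IsFiniteMeasure μ] {f : α → ℝ} {K k : ℕ} (hf : MemLp f K μ) (hk : k ≤ K) :
    Integrable (fun a => f a ^ k) μ := by
  have h := (hf.mono_exponent (p := k) (mod_cast hk)).integrable_norm_pow'
  exact h.mono' (hf.aestronglyMeasurable.pow k) (.of_forall fun a => by simp)

theorem ProbabilityTheory.IdentDistrib.integral_pow_eq {α β : Type*} [MeasurableSpace α]
    [MeasurableSpace β] {μ : Measure α} {ν : Measure β} {f : α → ℝ} {g : β → ℝ}
    (h : IdentDistrib f g μ ν) (k : ℕ) : ∫ a, f a ^ k ∂μ = ∫ b, g b ^ k ∂ν :=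
  (h.comp (measurable_id.pow_const k)).integral_eq

section PartialSums

variable {Ω : Type*} [MeasurableSpace Ω] {μ : Measure Ω} {ξ : ℕ → Ω → ℝ} {K : ℕ}

theorem memLp_sum_range (hident : ∀ i, IdentDistrib (ξ i) (ξ 0) μ μ) (hK : MemLp (ξ 0) K μ)
    (n : ℕ) : MemLp (fun ω => ∑ i ∈ range n, ξ i ω) K μ :=
  memLp_finsetSum _ fun i _ => (hident i).memLp_iff.2 hK

theorem indepFun_pow_sum_range_pow (hindep : iIndepFun ξ μ)
    (hident : ∀ i, IdentDistrib (ξ i) (ξ 0) μ μ) (n j k : ℕ) :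
    IndepFun (fun ω => (∑ i ∈ range n, ξ i ω) ^ j) (fun ω => ξ n ω ^ k) μ := by
  have h := hindep.indepFun_finsetSum_of_notMem₀ (fun i => (hident i).aemeasurable_fst)
    (notMem_range_self (n := n))
  simpa only [Function.comp_def, Finset.sum_apply, id] using
    h.comp (measurable_id.pow_const j) (measurable_id.pow_const k)

theorem integral_pow_sum_range_mul_pow [IsFiniteMeasure μ] (hindep : iIndepFun ξ μ)
    (hident : ∀ i, IdentDistrib (ξ i) (ξ 0) μ μ) (hK : MemLp (ξ 0) K μ)
    {j k : ℕ} (hj : j ≤ K) (hk : k ≤ K) (n : ℕ) :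
    ∫ ω, (∑ i ∈ range n, ξ i ω) ^ j * ξ n ω ^ k ∂μ
      = (∫ ω, (∑ i ∈ range n, ξ i ω) ^ j ∂μ) * ∫ ω, ξ 0 ω ^ k ∂μ := by
  rw [(indepFun_pow_sum_range_pow hindep hident n j k).integral_fun_mul_eq_mul_integral
    ((memLp_sum_range hident hK n).integrable_pow_of_le hj).aestronglyMeasurable
    (((hident n).memLp_iff.2 hK).integrable_pow_of_le hk).aestronglyMeasurable,
    (hident n).integral_pow_eq]

theorem integrable_pow_sum_range_mul_pow [IsFiniteMeasure μ] (hindep : iIndepFun ξ μ)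
    (hident : ∀ i, IdentDistrib (ξ i) (ξ 0) μ μ) (hK : MemLp (ξ 0) K μ)
    {j k : ℕ} (hj : j ≤ K) (hk : k ≤ K) (n : ℕ) :
    Integrable (fun ω => (∑ i ∈ range n, ξ i ω) ^ j * ξ n ω ^ k) μ :=
  (indepFun_pow_sum_range_pow hindep hident n j k).integrable_mul
    ((memLp_sum_range hident hK n).integrable_pow_of_le hj)
    (((hident n).memLp_iff.2 hK).integrable_pow_of_le hk)

theorem integral_pow_sum_range_succ [IsFiniteMeasure μ] (hindep : iIndepFun ξ μ)
    (hident : ∀ i, IdentDistrib (ξ i) (ξ 0) μ μ) (hK : MemLp (ξ 0) K μ) {k : ℕ} (hk : k ≤ K)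
    (n : ℕ) :
    ∫ ω, (∑ i ∈ range (n + 1), ξ i ω) ^ k ∂μ
      = ∑ j ∈ range (k + 1), k.choose j * (∫ ω, (∑ i ∈ range n, ξ i ω) ^ j ∂μ)
          * ∫ ω, ξ 0 ω ^ (k - j) ∂μ := by
  simp_rw [sum_range_succ _ n, add_pow]
  rw [integral_finsetSum]
  · refine sum_congr rfl fun j hj => ?_
    have hjk : j ≤ k := Nat.lt_succ_iff.mp (mem_range.mp hj)
    rw [integral_mul_const, integral_pow_sum_range_mul_pow hindep hident hK (by omega) (by omega)]
    ring
  · exact fun j hj => (integrable_pow_sum_range_mul_pow hindep hident hK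
      (by grind) (by omega) n).mul_const _

theorem exists_abs_integral_pow_sum_range_le [IsProbabilityMeasure μ] (hindep : iIndepFun ξ μ)
    (hident : ∀ i, IdentDistrib (ξ i) (ξ 0) μ μ) (hK : MemLp (ξ 0) K μ)
    (hcent : ∫ ω, ξ 0 ω ∂μ = 0) :
    ∃ C, ∀ k ≤ K, ∀ n, |∫ ω, (∑ i ∈ range n, ξ i ω) ^ k ∂μ| ≤ C * ((n : ℝ) + 1) ^ (k / 2) :=
  exists_abs_le_of_binomial_convolution (E := fun k n => ∫ ω, (∑ i ∈ range n, ξ i ω) ^ k ∂μ)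
    (m := fun k => ∫ ω, ξ 0 ω ^ k ∂μ)
    (fun _ hk n => integral_pow_sum_range_succ hindep hident hK hk n) (by simp)
    (by simpa using hcent)

theorem integral_sq_mean_increment_pow_four_le [IsFiniteMeasure μ] (hindep : iIndepFun ξ μ)
    (hident : ∀ i, IdentDistrib (ξ i) (ξ 0) μ μ) (hK : MemLp (ξ 0) 8 μ) {n : ℕ} (hn : 2 ≤ n) :
    ∫ ω, ((1 / (n : ℝ) * ∑ i ∈ range n, ξ i ω) ^ 2
      - (1 / ((n - 1 : ℕ) : ℝ) * ∑ i ∈ range (n - 1), ξ i ω) ^ 2) ^ 4 ∂μ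
      ≤ 1024 / (n : ℝ) ^ 8 * ((∫ ω, (∑ i ∈ range (n - 1), ξ i ω) ^ 4 ∂μ) * ∫ ω, ξ 0 ω ^ 4 ∂μ)
        + 64 / (n : ℝ) ^ 8 * ∫ ω, ξ 0 ω ^ 8 ∂μ
        + 32768 / (n : ℝ) ^ 12 * ∫ ω, (∑ i ∈ range (n - 1), ξ i ω) ^ 8 ∂μ := by
  obtain ⟨m, rfl⟩ : ∃ m, n = m + 1 := ⟨n - 1, by omega⟩
  set N : ℝ := ((m + 1 : ℕ) : ℝ)
  have hN : 2 ≤ N := by simp only [N]; exact_mod_cast hn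
  have hm : ((m + 1 - 1 : ℕ) : ℝ) = N - 1 := by simp [N]
  set S := fun ω => ∑ i ∈ range m, ξ i ω
  have hS4 : Integrable (fun ω => S ω ^ 4 * ξ m ω ^ 4) μ :=
    integrable_pow_sum_range_mul_pow hindep hident hK (by norm_num) (by norm_num) m
  have hξ8 : Integrable (fun ω => ξ m ω ^ 8) μ :=
    ((hident m).memLp_iff.2 hK).integrable_pow_of_le le_rfl
  have hS8 : Integrable (fun ω => S ω ^ 8) μ :=
    (memLp_sum_range hident hK m).integrable_pow_of_le le_rfl
  rw [hm, Nat.add_sub_cancel]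
  simp_rw [sum_range_succ _ m]
  calc _ ≤ ∫ ω, (1024 / N ^ 8 * (S ω ^ 4 * ξ m ω ^ 4) + 64 / N ^ 8 * ξ m ω ^ 8
          + 32768 / N ^ 12 * S ω ^ 8) ∂μ :=
        integral_mono_of_nonneg (.of_forall fun ω => by positivity)
          (((hS4.const_mul _).add (hξ8.const_mul _)).add (hS8.const_mul _))
          (.of_forall fun ω => sq_mean_increment_pow_four_le (S ω) (ξ m ω) hN)
    _ = _ := by
        rw [integral_add, integral_add, integral_const_mul, integral_const_mul, integral_const_mul,
          integral_pow_sum_range_mul_pow hindep hident hK (by norm_num) (by norm_num),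
          (hident m).integral_pow_eq]
        exacts [hS4.const_mul _, hξ8.const_mul _, (hS4.const_mul _).add (hξ8.const_mul _),
          hS8.const_mul _]

theorem exists_integral_sq_mean_increment_pow_four_le [IsProbabilityMeasure μ]
    (hindep : iIndepFun ξ μ) (hident : ∀ i, IdentDistrib (ξ i) (ξ 0) μ μ) (hK : MemLp (ξ 0) 8 μ)
    (hcent : ∫ ω, ξ 0 ω ∂μ = 0) :
    ∃ B, ∀ n : ℕ, 2 ≤ n → ∫ ω, ((1 / (n : ℝ) * ∑ i ∈ range n, ξ i ω) ^ 2
      - (1 / ((n - 1 : ℕ) : ℝ) * ∑ i ∈ range (n - 1), ξ i ω) ^ 2) ^ 4 ∂μ ≤ B / (n : ℝ) ^ 6 := by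
  obtain ⟨C, hC⟩ := exists_abs_integral_pow_sum_range_le hindep hident hK hcent
  have hC0 : 0 ≤ C := by simpa using (abs_nonneg _).trans (hC 0 (Nat.zero_le 8) 0)
  set m4 := ∫ ω, ξ 0 ω ^ 4 ∂μ
  set m8 := ∫ ω, ξ 0 ω ^ 8 ∂μ
  refine ⟨1024 * C * |m4| + 64 * |m8| + 32768 * C, fun n hn => ?_⟩
  have hn1 : ((n - 1 : ℕ) : ℝ) + 1 = n := by rw [Nat.cast_sub (by omega)]; ring
  have hE4 := hC 4 (by norm_num) (n - 1)
  have hE8 := hC 8 le_rfl (n - 1)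
  rw [hn1] at hE4 hE8
  have hN : (1 : ℝ) ≤ n := by exact_mod_cast (by omega : 1 ≤ n)
  calc _ ≤ _ := integral_sq_mean_increment_pow_four_le hindep hident hK hn
    _ ≤ 1024 / (n : ℝ) ^ 8 * (C * (n : ℝ) ^ 2 * |m4|) + 64 / (n : ℝ) ^ 8 * |m8|
          + 32768 / (n : ℝ) ^ 12 * (C * (n : ℝ) ^ 4) := by
        gcongr
        exacts [(le_abs_self _).trans hE4, le_abs_self _, le_abs_self _, (le_abs_self _).trans hE8]
    _ = 1024 * C * |m4| / (n : ℝ) ^ 6 + (64 * |m8| + 32768 * C) * (1 / (n : ℝ) ^ 8) := by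
        field_simp; ring
    _ ≤ 1024 * C * |m4| / (n : ℝ) ^ 6 + (64 * |m8| + 32768 * C) * (1 / (n : ℝ) ^ 6) := by
        gcongr
        norm_num
    _ = _ := by ring

end PartialSums

/-- STATEMENT 2: for i.i.d. centered ξ with finite sixteenth moment,
`E((Rₙ − Rₙ₋₁)⁴) = O(n⁻⁶)` where `Rₙ` is the squared sample mean. -/
theorem stmt_4 {Ω : Type*} [MeasureSpace Ω] [IsProbabilityMeasure (ℙ : Measure Ω)]
    (ξ : ℕ → Ω → ℝ)
    (hmeas : ∀ i, Measurable (ξ i))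
    (hindep : iIndepFun ξ ℙ)
    (hident : ∀ i, Measure.map (ξ i) ℙ = Measure.map (ξ 0) ℙ)
    (hcent : ∫ ω, ξ 0 ω ∂ℙ = 0)
    (hmom : Integrable (fun ω => (ξ 0 ω) ^ 16) ℙ)
    (R : ℕ → Ω → ℝ)
    (hR : ∀ n ω, R n ω = (((1 : ℝ) / n) * ∑ i ∈ range n, ξ i ω) ^ 2) :
    (fun n : ℕ => ∫ ω, (R n ω - R (n - 1) ω) ^ 4 ∂ℙ)
      =O[atTop] fun n : ℕ => ((n : ℝ) ^ 6)⁻¹ := by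
  have hid : ∀ i, IdentDistrib (ξ i) (ξ 0) ℙ ℙ :=
    fun i => ⟨(hmeas i).aemeasurable, (hmeas 0).aemeasurable, hident i⟩
  have hL16 : MemLp (ξ 0) 16 ℙ := by
    rw [← integrable_norm_rpow_iff (hmeas 0).aestronglyMeasurable (by norm_num) (by norm_num)]
    simpa [Even.pow_abs (by decide : Even 16)] using hmom
  obtain ⟨B, hB⟩ := exists_integral_sq_mean_increment_pow_four_le hindep hid
    (hL16.mono_exponent (by norm_num)) hcent
  refine IsBigO.of_bound B ?_
  filter_upwards [eventually_ge_atTop 2] with n hn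
  rw [Real.norm_of_nonneg (integral_nonneg fun ω => by positivity),
    Real.norm_of_nonneg (by positivity), ← div_eq_mul_inv]
  simpa only [hR] using hB n hn
end

section
/- Let X_{i1}, …, X_{i n_i}, i = 1, 2, be two independent i.i.d. samples with common mean μ, finite eighth moments, and strictly ordered variances σ₁² < σ₂². Let Sᵢ² = (1/nᵢ)∑ⱼ(X_{ij} − X̄ᵢ)² be the biased sample variances, and suppose n₁ = n₂ = n. Then there exists a constant C such that P(S₁² > S₂²) ≤ C·n⁻² for all n ≥ 2. -/
/-!
Put `d = σ₂² - σ₁² > 0`, `Wⱼ = (X₁ⱼ - μ)² - (X₂ⱼ - μ)² + d` and `Uⱼ = X₂ⱼ - μ`. Expanding both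
sample variances around the common mean `μ` shows that `S₁² > S₂²` forces `∑ⱼ Wⱼ ≥ n d / 2` or
`(∑ⱼ Uⱼ)² ≥ n² d / 2`. The `Wⱼ` and the `Uⱼ` are i.i.d. and centred, with finite fourth moments
(this is where the eighth moments of the `X`'s enter), so the fourth moment of their partial sums
is `n E W⁴ + 3 n (n - 1) (E W²)² = O(n²)`, and Markov's inequality for fourth powers bounds each
of the two events by `O(n⁻²)`.
-/

open MeasureTheory ProbabilityTheory Finset

noncomputable def sampleVar (n : ℕ) (x : ℕ → ℝ) : ℝ :=
  ((1 : ℝ) / n) * ∑ j ∈ range n, (x j - ((1 : ℝ) / n) * ∑ k ∈ range n, x k) ^ 2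

lemma sampleVar_eq_sub_sq (n : ℕ) (x : ℕ → ℝ) (μ : ℝ) :
    sampleVar n x =
      1 / n * ∑ j ∈ range n, (x j - μ) ^ 2 - (1 / n * ∑ j ∈ range n, (x j - μ)) ^ 2 := by
  rcases Nat.eq_zero_or_pos n with rfl | hn
  · simp [sampleVar]
  have hn' : (n : ℝ) ≠ 0 := by positivity
  have hmean : (1 / n : ℝ) * ∑ k ∈ range n, x k = μ + 1 / n * ∑ j ∈ range n, (x j - μ) := by
    rw [sum_sub_distrib, sum_const, card_range, nsmul_eq_mul]
    field_simp
    ring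
  simp only [sampleVar, hmean, sub_add_eq_sub_sub, sub_sq _ ((1 / n : ℝ) * _), sum_add_distrib,
    sum_sub_distrib, ← sum_mul, ← mul_sum, sum_const, card_range, nsmul_eq_mul]
  field_simp
  ring

lemma sampleVar_lt_sampleVar_imp {n : ℕ} (hn : n ≠ 0) {x y : ℕ → ℝ} {μ d : ℝ} (hd : 0 < d)
    (h : sampleVar n y < sampleVar n x) :
    (d / 2) ^ 4 * n ^ 4 ≤ (∑ j ∈ range n, ((x j - μ) ^ 2 - (y j - μ) ^ 2 + d)) ^ 4 ∨
      d ^ 2 / 4 * n ^ 4 ≤ (∑ j ∈ range n, (y j - μ)) ^ 4 := by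
  set A := ∑ j ∈ range n, ((x j - μ) ^ 2 - (y j - μ) ^ 2 + d)
  set B := ∑ j ∈ range n, (y j - μ)
  have hn' : (0 : ℝ) < n := by positivity
  have hA : A = ∑ j ∈ range n, (x j - μ) ^ 2 - ∑ j ∈ range n, (y j - μ) ^ 2 + n * d := by
    simp only [A, sum_add_distrib, sum_sub_distrib, sum_const, card_range, nsmul_eq_mul]
  have hgap : n * d < A + B ^ 2 / n := by
    rw [sampleVar_eq_sub_sq n x μ, sampleVar_eq_sub_sq n y μ] at h
    rw [hA]
    have := sq_nonneg (∑ j ∈ range n, (x j - μ))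
    field_simp at h ⊢
    nlinarith
  have hcases : n * d / 2 ≤ A ∨ n ^ 2 * d / 2 ≤ B ^ 2 := by
    by_contra! hlt
    have : B ^ 2 / n < n * d / 2 := by rw [div_lt_iff₀ hn']; nlinarith
    linarith
  refine hcases.imp (fun hA => ?_) (fun hB => ?_)
  · calc (d / 2) ^ 4 * n ^ 4 = (n * d / 2) ^ 4 := by ring
      _ ≤ A ^ 4 := pow_le_pow_left₀ (by positivity) hA 4
  · calc d ^ 2 / 4 * n ^ 4 = (n ^ 2 * d / 2) ^ 2 := by ring
      _ ≤ (B ^ 2) ^ 2 := pow_le_pow_left₀ (by positivity) hB 2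
      _ = B ^ 4 := by ring

section Probability

variable {Ω : Type*} [MeasurableSpace Ω] {P : Measure Ω}

lemma memLp_of_integrable_abs_pow {X : Ω → ℝ} {p : ℕ} (hp : p ≠ 0) (hX : Measurable X)
    (h : Integrable (fun ω => |X ω| ^ p) P) : MemLp X p P :=
  (integrable_norm_rpow_iff hX.aestronglyMeasurable (by exact_mod_cast hp) (by simp)).mp
    (by simpa using h)

lemma MeasureTheory.MemLp.sq {f : Ω → ℝ} {p : ENNReal} (hf : MemLp f (2 * p) P) :
    MemLp (fun ω => f ω ^ 2) p P := by
  have := hf.norm_rpow_div 2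
  rw [mul_comm, ENNReal.mul_div_cancel_right two_ne_zero ENNReal.ofNat_ne_top] at this
  simpa using this

lemma indepFun_sum_range_pair {β : Type*} [MeasurableSpace β] {X Y : ℕ → Ω → β}
    (hX : ∀ j, Measurable (X j)) (hY : ∀ j, Measurable (Y j))
    (hindep : iIndepFun (Sum.elim X Y) P) {f : β × β → ℝ} (hf : Measurable f) (n : ℕ) :
    IndepFun (fun ω => ∑ j ∈ range n, f (X j ω, Y j ω)) (fun ω => f (X n ω, Y n ω)) P := by
  set m : ℕ ⊕ ℕ → MeasurableSpace Ω := fun i => MeasurableSpace.comap (Sum.elim X Y i) ‹_›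
  have hm : ∀ i, m i ≤ ‹MeasurableSpace Ω› := by
    rintro (j | j)
    exacts [(hX j).comap_le, (hY j).comap_le]
  -- the indices `j < n` of both samples versus the two indices `n`
  have hdisj : Disjoint (Sum.elim id id ⁻¹' Set.Iio n) (Sum.elim id id ⁻¹' {n}) :=
    Disjoint.preimage _ (Set.disjoint_singleton_right.mpr (lt_irrefl n))
  have hblocks := indep_iSup_of_disjoint hm hindep.iIndep hdisj
  have hpair : ∀ {k : ℕ} {S : Set (ℕ ⊕ ℕ)}, Sum.inl k ∈ S → Sum.inr k ∈ S →
      Measurable[⨆ i ∈ S, m i] fun ω => f (X k ω, Y k ω) := fun h1 h2 =>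
    hf.comp (((comap_measurable _).mono (le_iSup₂ (f := fun i _ => m i) _ h1) le_rfl).prodMk
      ((comap_measurable _).mono (le_iSup₂ (f := fun i _ => m i) _ h2) le_rfl))
  refine indep_of_indep_of_le_right (indep_of_indep_of_le_left hblocks ?_) ?_
  · refine Measurable.comap_le (Finset.measurable_sum _ fun j hj => hpair ?_ ?_) <;>
      simpa using hj
  · exact (hpair (by simp) (by simp)).comap_le

section FiniteMeasure

variable [IsFiniteMeasure P]

lemma MeasureTheory.MemLp.integrable_pow_of_le_s5 {f : Ω → ℝ} {p k : ℕ} (hf : MemLp f p P)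
    (hk : k ≤ p) : Integrable (fun ω => f ω ^ k) P := by
  have hfk : MemLp f k P := hf.mono_exponent (by exact_mod_cast hk)
  refine (integrable_norm_iff (hfk.aestronglyMeasurable.pow k)).mp ?_
  simpa only [Pi.pow_apply, norm_pow] using hfk.integrable_norm_pow'

lemma memLp_sub_const_sq {X : Ω → ℝ} {p : ℕ} (hp : p ≠ 0) (hX : Measurable X)
    (h : Integrable (fun ω => |X ω| ^ (2 * p)) P) (c : ℝ) :
    MemLp (fun ω => (X ω - c) ^ 2) p P := by
  have hX' : MemLp X (2 * p) P := by
    exact_mod_cast memLp_of_integrable_abs_pow (by positivity) hX h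
  exact (hX'.sub (memLp_const c)).sq

lemma ProbabilityTheory.IndepFun.integral_add_pow {T V : Ω → ℝ} (h : IndepFun T V P) {m : ℕ}
    (hT : MemLp T m P) (hV : MemLp V m P) :
    ∫ ω, (T ω + V ω) ^ m ∂P =
      ∑ k ∈ range (m + 1), (∫ ω, T ω ^ k ∂P) * (∫ ω, V ω ^ (m - k) ∂P) * m.choose k := by
  have hTV (k : ℕ) : IndepFun (fun ω => T ω ^ k) (fun ω => V ω ^ (m - k)) P :=
    h.comp (measurable_id.pow_const k) (measurable_id.pow_const (m - k))
  have hint : ∀ k ∈ range (m + 1),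
      Integrable (fun ω => T ω ^ k * V ω ^ (m - k) * m.choose k) P := fun k hk =>
    ((hTV k).integrable_mul (hT.integrable_pow_of_le_s5 (by simpa [Nat.lt_succ_iff] using hk))
      (hV.integrable_pow_of_le_s5 (Nat.sub_le m k))).mul_const _
  simp_rw [add_pow]
  rw [integral_finsetSum _ hint]
  refine sum_congr rfl fun k _ => ?_
  rw [integral_mul_const, (hTV k).integral_fun_mul_eq_mul_integral
    (hT.aestronglyMeasurable.pow k) (hV.aestronglyMeasurable.pow _)]

end FiniteMeasure

section SumMoments

variable {W : ℕ → Ω → ℝ}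

lemma memLp_sum_range_s5 {p : ENNReal} (hid : ∀ j, IdentDistrib (W j) (W 0) P P)
    (hW : MemLp (W 0) p P) (n : ℕ) : MemLp (fun ω => ∑ j ∈ range n, W j ω) p P := by
  simpa only [← Finset.sum_apply] using
    memLp_finsetSum' (range n) fun j _ => (hid j).memLp_iff.mpr hW

lemma integral_sum_range_eq_zero (hid : ∀ j, IdentDistrib (W j) (W 0) P P)
    (hW : Integrable (W 0) P) (hmean : ∫ ω, W 0 ω ∂P = 0) (n : ℕ) :
    ∫ ω, ∑ j ∈ range n, W j ω ∂P = 0 := by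
  rw [integral_finsetSum _ fun j _ => (hid j).integrable_iff.mpr hW]
  exact sum_eq_zero fun j _ => (hid j).integral_eq.trans hmean

variable [IsProbabilityMeasure P]

lemma ProbabilityTheory.IndepFun.integral_add_sq_of_integral_eq_zero {T V : Ω → ℝ}
    (h : IndepFun T V P) (hT : MemLp T 2 P) (hV : MemLp V 2 P)
    (hT0 : ∫ ω, T ω ∂P = 0) (hV0 : ∫ ω, V ω ∂P = 0) :
    ∫ ω, (T ω + V ω) ^ 2 ∂P = ∫ ω, T ω ^ 2 ∂P + ∫ ω, V ω ^ 2 ∂P := by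
  rw [h.integral_add_pow hT hV]
  simp only [Nat.reduceAdd, sum_range_succ, range_one, sum_singleton, pow_zero, integral_const,
    probReal_univ, smul_eq_mul, mul_one, tsub_zero, one_mul, Nat.choose_zero_right, Nat.cast_one,
    pow_one, hT0, Nat.add_one_sub_one, hV0, mul_zero, Nat.choose_succ_self_right, Nat.cast_ofNat,
    zero_mul, add_zero, tsub_self, Nat.choose_self]
  ring

lemma ProbabilityTheory.IndepFun.integral_add_pow_four_of_integral_eq_zero {T V : Ω → ℝ}
    (h : IndepFun T V P) (hT : MemLp T 4 P) (hV : MemLp V 4 P)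
    (hT0 : ∫ ω, T ω ∂P = 0) (hV0 : ∫ ω, V ω ∂P = 0) :
    ∫ ω, (T ω + V ω) ^ 4 ∂P =
      ∫ ω, T ω ^ 4 ∂P + 6 * (∫ ω, T ω ^ 2 ∂P) * (∫ ω, V ω ^ 2 ∂P) + ∫ ω, V ω ^ 4 ∂P := by
  rw [h.integral_add_pow hT hV]
  simp only [Nat.reduceAdd, sum_range_succ, range_one, sum_singleton, pow_zero, integral_const,
    probReal_univ, smul_eq_mul, mul_one, tsub_zero, one_mul, Nat.choose, Nat.cast_one, pow_one,
    hT0, Nat.add_one_sub_one, zero_mul, add_zero, Nat.cast_ofNat, Nat.reduceSub, hV0, mul_zero,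
    tsub_self]
  ring

lemma integral_sum_range_sq (hindep : ∀ n, IndepFun (fun ω => ∑ j ∈ range n, W j ω) (W n) P)
    (hid : ∀ j, IdentDistrib (W j) (W 0) P P) (hW : MemLp (W 0) 2 P)
    (hmean : ∫ ω, W 0 ω ∂P = 0) (n : ℕ) :
    ∫ ω, (∑ j ∈ range n, W j ω) ^ 2 ∂P = n * ∫ ω, W 0 ω ^ 2 ∂P := by
  induction n with
  | zero => simp
  | succ n ih =>
    simp_rw [sum_range_succ]
    rw [(hindep n).integral_add_sq_of_integral_eq_zero (memLp_sum_range_s5 hid hW n)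
      ((hid n).memLp_iff.mpr hW) (integral_sum_range_eq_zero hid (hW.integrable one_le_two) hmean n)
      ((hid n).integral_eq.trans hmean), ih, (hid n).pow.integral_eq]
    push_cast
    ring

lemma integral_sum_range_pow_four
    (hindep : ∀ n, IndepFun (fun ω => ∑ j ∈ range n, W j ω) (W n) P)
    (hid : ∀ j, IdentDistrib (W j) (W 0) P P) (hW : MemLp (W 0) 4 P)
    (hmean : ∫ ω, W 0 ω ∂P = 0) (n : ℕ) :
    ∫ ω, (∑ j ∈ range n, W j ω) ^ 4 ∂P =
      n * ∫ ω, W 0 ω ^ 4 ∂P + 3 * n * (n - 1) * (∫ ω, W 0 ω ^ 2 ∂P) ^ 2 := by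
  induction n with
  | zero => simp
  | succ n ih =>
    simp_rw [sum_range_succ]
    rw [(hindep n).integral_add_pow_four_of_integral_eq_zero (memLp_sum_range_s5 hid hW n)
      ((hid n).memLp_iff.mpr hW)
      (integral_sum_range_eq_zero hid (hW.integrable (by norm_num)) hmean n)
      ((hid n).integral_eq.trans hmean), ih, (hid n).pow.integral_eq, (hid n).pow.integral_eq,
      integral_sum_range_sq hindep hid (hW.mono_exponent (by norm_num)) hmean]
    push_cast
    ring

lemma measureReal_sum_range_pow_four_ge_le
    (hindep : ∀ n, IndepFun (fun ω => ∑ j ∈ range n, W j ω) (W n) P)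
    (hid : ∀ j, IdentDistrib (W j) (W 0) P P) (hW : MemLp (W 0) 4 P)
    (hmean : ∫ ω, W 0 ω ∂P = 0) {K : ℝ} (hK : 0 < K) {n : ℕ} (hn : n ≠ 0) :
    P.real {ω | K * n ^ 4 ≤ (∑ j ∈ range n, W j ω) ^ 4} ≤
      (∫ ω, W 0 ω ^ 4 ∂P + 3 * (∫ ω, W 0 ω ^ 2 ∂P) ^ 2) / K / n ^ 2 := by
  set m2 := ∫ ω, W 0 ω ^ 2 ∂P
  set m4 := ∫ ω, W 0 ω ^ 4 ∂P
  have hmarkov := mul_meas_ge_le_integral_of_nonneg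
    (ae_of_all _ fun ω => Even.pow_nonneg (by decide) _)
    ((memLp_sum_range_s5 hid hW n).integrable_pow_of_le_s5 le_rfl) (K * n ^ 4)
  rw [integral_sum_range_pow_four hindep hid hW hmean] at hmarkov
  have hn1 : (1 : ℝ) ≤ n := by exact_mod_cast Nat.one_le_iff_ne_zero.mpr hn
  have hm4 : 0 ≤ m4 := integral_nonneg fun ω => by positivity
  rw [div_div, le_div_iff₀ (by positivity)]
  refine le_of_mul_le_mul_right ?_ (by positivity : (0 : ℝ) < n ^ 2)
  calc _ = K * n ^ 4 * P.real {ω | K * n ^ 4 ≤ (∑ j ∈ range n, W j ω) ^ 4} := by ring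
    _ ≤ n * m4 + 3 * n * (n - 1) * m2 ^ 2 := hmarkov
    _ ≤ (m4 + 3 * m2 ^ 2) * n ^ 2 := by
      nlinarith [mul_nonneg (mul_nonneg hm4 (sub_nonneg.mpr hn1)) (by positivity : (0 : ℝ) ≤ n),
        mul_nonneg (sq_nonneg m2) (by positivity : (0 : ℝ) ≤ n)]

end SumMoments

lemma exists_measureReal_sum_range_pair_pow_four_ge_le [IsProbabilityMeasure P] {β : Type*}
    [MeasurableSpace β] {X Y : ℕ → Ω → β} (hX : ∀ j, Measurable (X j))
    (hY : ∀ j, Measurable (Y j)) (hindep : iIndepFun (Sum.elim X Y) P)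
    (hidX : ∀ j, IdentDistrib (X j) (X 0) P P) (hidY : ∀ j, IdentDistrib (Y j) (Y 0) P P)
    {f : β × β → ℝ} (hf : Measurable f) (hL4 : MemLp (fun ω => f (X 0 ω, Y 0 ω)) 4 P)
    (hmean : ∫ ω, f (X 0 ω, Y 0 ω) ∂P = 0) :
    ∃ C, ∀ {K : ℝ}, 0 < K → ∀ {n : ℕ}, n ≠ 0 →
      P.real {ω | K * n ^ 4 ≤ (∑ j ∈ range n, f (X j ω, Y j ω)) ^ 4} ≤ C / K / n ^ 2 :=
  ⟨_, fun hK _ hn => measureReal_sum_range_pow_four_ge_le (W := fun j ω => f (X j ω, Y j ω))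
    (indepFun_sum_range_pair hX hY hindep hf)
    (fun j => ((hidX j).prodMk (hidY j) (hindep.indepFun Sum.inl_ne_inr)
      (hindep.indepFun Sum.inl_ne_inr)).comp hf) hL4 hmean hK hn⟩

end Probability

/-- for two independent i.i.d. samples of equal size `n` with common
mean, finite eighth moments and strictly ordered variances `σ₁² < σ₂²`, the
probability that the (biased) sample variances are wrongly ordered is `≤ C·n⁻²`. -/
theorem stmt_5 {Ω : Type*} [MeasureSpace Ω] [IsProbabilityMeasure (ℙ : Measure Ω)]
    (X1 X2 : ℕ → Ω → ℝ)
    (hmeas1 : ∀ j, Measurable (X1 j)) (hmeas2 : ∀ j, Measurable (X2 j))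
    (hindep : iIndepFun (fun i : ℕ ⊕ ℕ => Sum.elim X1 X2 i) ℙ)
    (hident1 : ∀ j, Measure.map (X1 j) ℙ = Measure.map (X1 0) ℙ)
    (hident2 : ∀ j, Measure.map (X2 j) ℙ = Measure.map (X2 0) ℙ)
    (μ : ℝ) (hmean1 : ∫ ω, X1 0 ω ∂ℙ = μ) (hmean2 : ∫ ω, X2 0 ω ∂ℙ = μ)
    (hmom1 : Integrable (fun ω => |X1 0 ω| ^ 8) ℙ)
    (hmom2 : Integrable (fun ω => |X2 0 ω| ^ 8) ℙ)
    (hvar : variance (X1 0) ℙ < variance (X2 0) ℙ) :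
    ∃ C : ℝ, ∀ n : ℕ, 2 ≤ n →
      (ℙ {ω |
        ((1 : ℝ) / n) * ∑ j ∈ range n, (X1 j ω - ((1 : ℝ) / n) * ∑ k ∈ range n, X1 k ω) ^ 2
          >
        ((1 : ℝ) / n) * ∑ j ∈ range n, (X2 j ω - ((1 : ℝ) / n) * ∑ k ∈ range n, X2 k ω) ^ 2
        }).toReal ≤ C / (n : ℝ) ^ 2 := by
  set d := variance (X2 0) ℙ - variance (X1 0) ℙ
  have hd : 0 < d := sub_pos.mpr hvar
  have hid1 (j : ℕ) : IdentDistrib (X1 j) (X1 0) ℙ ℙ := ⟨by fun_prop, by fun_prop, hident1 j⟩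
  have hid2 (j : ℕ) : IdentDistrib (X2 j) (X2 0) ℙ ℙ := ⟨by fun_prop, by fun_prop, hident2 j⟩
  have hs1 := memLp_sub_const_sq four_ne_zero (hmeas1 0) hmom1 μ
  have hs2 := memLp_sub_const_sq four_ne_zero (hmeas2 0) hmom2 μ
  have hL8 : MemLp (X2 0) 8 ℙ := memLp_of_integrable_abs_pow (by norm_num) (hmeas2 0) hmom2
  have hWmean : ∫ ω, (X1 0 ω - μ) ^ 2 - (X2 0 ω - μ) ^ 2 + d ∂ℙ = 0 := by
    rw [integral_add (f := fun ω => (X1 0 ω - μ) ^ 2 - (X2 0 ω - μ) ^ 2)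
      ((hs1.integrable (by norm_num)).sub (hs2.integrable (by norm_num))) (integrable_const d),
      integral_sub (hs1.integrable (by norm_num)) (hs2.integrable (by norm_num))]
    simp [d, variance_eq_integral (hmeas1 0).aemeasurable,
      variance_eq_integral (hmeas2 0).aemeasurable, hmean1, hmean2]
  have hUmean : ∫ ω, X2 0 ω - μ ∂ℙ = 0 := by
    rw [integral_sub (hL8.integrable (by norm_num)) (integrable_const μ), hmean2]
    simp
  obtain ⟨CW, hCW⟩ := exists_measureReal_sum_range_pair_pow_four_ge_le hmeas1 hmeas2 hindep
    hid1 hid2 (f := fun p => (p.1 - μ) ^ 2 - (p.2 - μ) ^ 2 + d) (by fun_prop)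
    ((hs1.sub hs2).add (memLp_const d)) hWmean
  obtain ⟨CU, hCU⟩ := exists_measureReal_sum_range_pair_pow_four_ge_le hmeas1 hmeas2 hindep
    hid1 hid2 (f := fun p => p.2 - μ) (by fun_prop)
    ((hL8.sub (memLp_const μ)).mono_exponent (by norm_num)) hUmean
  refine ⟨CW / (d / 2) ^ 4 + CU / (d ^ 2 / 4), fun n hn => ?_⟩
  have hn0 : n ≠ 0 := by omega
  calc _ ≤ (ℙ : Measure Ω).real
        ({ω | (d / 2) ^ 4 * n ^ 4 ≤ (∑ j ∈ range n, ((X1 j ω - μ) ^ 2 - (X2 j ω - μ) ^ 2 + d)) ^ 4}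
          ∪ {ω | d ^ 2 / 4 * n ^ 4 ≤ (∑ j ∈ range n, (X2 j ω - μ)) ^ 4}) :=
        measureReal_mono fun ω hω => by exact sampleVar_lt_sampleVar_imp hn0 hd hω
    _ ≤ _ := measureReal_union_le _ _
    _ ≤ CW / (d / 2) ^ 4 / n ^ 2 + CU / (d ^ 2 / 4) / n ^ 2 :=
        add_le_add (hCW (by positivity) hn0) (hCU (by positivity) hn0)
    _ = _ := by ring
end
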